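/- Let η be a configuration and i ∈ Λ⁻⁻ a site such that at least three of the four junction sites of the tile t(i) are occupied by particles of type 1. Then the configuration η′ obtained from η by turning t(i) into a tb-tile (i.e., η′ agrees with η outside t(i), η′(i) = 2, and η′ = 1 on the four junction sites) satisfies H(η′) ≤ H(η). -/

import Mathlib

/- Common framework: two-type Kawasaki dynamics on a finite box in ℤ². -/

abbrev Site := ℤ × ℤ
abbrev Cell := ℤ × ℤ

/-- Nearest-neighbour adjacency on ℤ². -/
def adjacent (x y : Site) : Prop := |x.1 - y.1| + |x.2 - y.2| = 1

instance (x y : Site) : Decidable (adjacent x y) :=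
  inferInstanceAs (Decidable (|x.1 - y.1| + |x.2 - y.2| = 1))

/-- The four nearest neighbours of a site. -/
def nbrs (x : Site) : Finset Site :=
  {(x.1 + 1, x.2), (x.1 - 1, x.2), (x.1, x.2 + 1), (x.1, x.2 - 1)}

/-- Internal boundary ∂⁻Λ of a finite set Λ ⊂ ℤ². -/
def intBdry (Λ : Finset Site) : Finset Site := Λ.filter (fun x => ¬ nbrs x ⊆ Λ)

/-- Λ⁻ = Λ ∖ ∂⁻Λ. -/
def inner1 (Λ : Finset Site) : Finset Site := Λ \ intBdry Λ

/-- Λ⁻⁻ = Λ⁻ ∖ ∂⁻Λ⁻. -/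
def inner2 (Λ : Finset Site) : Finset Site := inner1 Λ \ intBdry (inner1 Λ)

/-- A configuration on Λ: each site of Λ carries 0 (empty), 1 (type 1) or 2 (type 2);
sites outside Λ are empty. -/
structure Config (Λ : Finset Site) where
  val : Site → Fin 3
  zero_outside : ∀ x, x ∉ Λ → val x = 0

/-- Number of particles of type 1. -/
def numType1 {Λ : Finset Site} (η : Config Λ) : ℕ := (Λ.filter (fun x => η.val x = 1)).card

/-- Number of particles of type 2. -/
def numType2 {Λ : Finset Site} (η : Config Λ) : ℕ := (Λ.filter (fun x => η.val x = 2)).card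

/-- Number of active bonds: unordered n.n. pairs of sites of Λ⁻, one carrying a 1 and the
other a 2 (each such unordered pair is counted once, as the ordered pair (type1,type2)). -/
def numBonds {Λ : Finset Site} (η : Config Λ) : ℕ :=
  ((inner1 Λ ×ˢ inner1 Λ).filter
    (fun p => adjacent p.1 p.2 ∧ η.val p.1 = 1 ∧ η.val p.2 = 2)).card

/-- The Hamiltonian H(η) = −U·B(η) + Δ1·n1(η) + Δ2·n2(η). -/
noncomputable def energy (U Δ1 Δ2 : ℝ) {Λ : Finset Site} (η : Config Λ) : ℝ :=
  -U * numBonds η + Δ1 * numType1 η + Δ2 * numType2 η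

/-- Allowed moves of the Kawasaki dynamics: hopping inside Λ, creation and annihilation
at the internal boundary. -/
def Communicates {Λ : Finset Site} (η η' : Config Λ) : Prop :=
  (∃ x ∈ Λ, ∃ y ∈ Λ, adjacent x y ∧ η.val x = 0 ∧ η.val y ≠ 0 ∧
      η'.val = Function.update (Function.update η.val x (η.val y)) y 0) ∨
  (∃ x ∈ intBdry Λ, ∃ v : Fin 3, v ≠ 0 ∧ η.val x = 0 ∧
      η'.val = Function.update η.val x v) ∨
  (∃ x ∈ intBdry Λ, η.val x ≠ 0 ∧ η'.val = Function.update η.val x 0)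

/-- ω is a path of allowed moves from η to η′. -/
def IsPath {Λ : Finset Site} (ω : List (Config Λ)) (η η' : Config Λ) : Prop :=
  ω.head? = some η ∧ ω.getLast? = some η' ∧ ω.Chain' Communicates

/-- Communication height between two sets of configurations:
Φ(A,B) = min over paths from A to B of the maximal energy along the path. -/
noncomputable def commHeightSet (U Δ1 Δ2 : ℝ) {Λ : Finset Site}
    (A B : Set (Config Λ)) : ℝ :=
  sInf {m : ℝ | ∃ η ∈ A, ∃ η' ∈ B, ∃ ω : List (Config Λ),
    IsPath ω η η' ∧ ∀ ξ ∈ ω, energy U Δ1 Δ2 ξ ≤ m}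

/-- Communication height Φ(η,η′). -/
noncomputable def commHeight (U Δ1 Δ2 : ℝ) {Λ : Finset Site} (η η' : Config Λ) : ℝ :=
  commHeightSet U Δ1 Δ2 {η} {η'}

/-- Stability level V_η = Φ(η, I_η) − H(η), where I_η = {ξ : H(ξ) < H(η)}. -/
noncomputable def stabLevel (U Δ1 Δ2 : ℝ) {Λ : Finset Site} (η : Config Λ) : ℝ :=
  commHeightSet U Δ1 Δ2 {η} {ξ : Config Λ | energy U Δ1 Δ2 ξ < energy U Δ1 Δ2 η}
    - energy U Δ1 Δ2 η

/-- The set of stable configurations (global minimizers of H). -/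
def Xstab (U Δ1 Δ2 : ℝ) (Λ : Finset Site) : Set (Config Λ) :=
  {η | ∀ ξ : Config Λ, energy U Δ1 Δ2 η ≤ energy U Δ1 Δ2 ξ}

/-- The set of metastable configurations (non-stable configurations of maximal
stability level). -/
def Xmeta (U Δ1 Δ2 : ℝ) (Λ : Finset Site) : Set (Config Λ) :=
  {η | η ∉ Xstab U Δ1 Δ2 Λ ∧
    ∀ ξ : Config Λ, ξ ∉ Xstab U Δ1 Δ2 Λ → stabLevel U Δ1 Δ2 ξ ≤ stabLevel U Δ1 Δ2 η}

/-- The empty configuration □. -/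
def emptyConfig (Λ : Finset Site) : Config Λ := ⟨fun _ => 0, fun _ _ => rfl⟩

/-- The critical length ℓ* = ⌈Δ1/(4U − Δ1 − Δ2)⌉. -/
noncomputable def lstar (U Δ1 Δ2 : ℝ) : ℤ := ⌈Δ1 / (4 * U - Δ1 - Δ2)⌉

/-- The box Λ: in dual coordinates u(x) = ((x1−x2)/2,(x1+x2)/2) the
(L+3/2)×(L+3/2) square centered at the origin, i.e. |x1−x2| ≤ L+1 and |x1+x2| ≤ L+1. -/
noncomputable def latBox (L : ℕ) : Finset Site :=
  (Finset.Icc (-(L : ℤ) - 1) ((L : ℤ) + 1) ×ˢ Finset.Icc (-(L : ℤ) - 1) ((L : ℤ) + 1)).filter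
    (fun x => |x.1 - x.2| ≤ (L : ℤ) + 1 ∧ |x.1 + x.2| ≤ (L : ℤ) + 1)

/-- The m×n dual rectangle of sites (in dual coordinates) with dual lower-left corner p
(in standard coordinates): sites p + i·(1,−1) + j·(1,1) for 0 ≤ i < m, 0 ≤ j < n.
All these sites have the same parity. -/
def dualRect (p : Site) (m n : ℕ) : Finset Site :=
  (Finset.range m ×ˢ Finset.range n).image
    (fun ij => ((p.1 + (ij.1 : ℤ) + (ij.2 : ℤ), p.2 + (ij.2 : ℤ) - (ij.1 : ℤ)) : Site))

/-- The sites adjacent to a set S but not in S. -/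
def siteBorder (S : Finset Site) : Finset Site := S.biUnion nbrs \ S

/-- ⊞: the tb-tiled configurations whose particles of type 2 occupy an L×L square in dual
coordinates filling Λ⁻ (type-2 sites in Λ⁻⁻, surrounding type-1 sites in Λ⁻); these are
the two largest checkerboard droplets (one of each parity). -/
def boxPlus (L : ℕ) : Set (Config (latBox L)) :=
  {η | ∃ p : Site,
      (∀ x, η.val x = 2 ↔ x ∈ dualRect p L L) ∧
      (∀ x, η.val x = 1 ↔ x ∈ siteBorder (dualRect p L L)) ∧
      dualRect p L L ⊆ inner2 (latBox L) ∧
      siteBorder (dualRect p L L) ⊆ inner1 (latBox L)}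

/-- The active-bond relation between sites. -/
def bondRel {Λ : Finset Site} (η : Config Λ) (x y : Site) : Prop :=
  x ∈ inner1 Λ ∧ y ∈ inner1 Λ ∧ adjacent x y ∧
  ((η.val x = 1 ∧ η.val y = 2) ∨ (η.val x = 2 ∧ η.val y = 1))

/-- C is a cluster of η: a maximal connected component of the occupied sites under the
active-bond relation. -/
def IsCluster {Λ : Finset Site} (η : Config Λ) (C : Finset Site) : Prop :=
  ∃ x : Site, η.val x ≠ 0 ∧ ∀ y : Site, y ∈ C ↔ Relation.ReflTransGen (bondRel η) x y

/-- The occupied sites of η form a single cluster. -/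
def SingleCluster {Λ : Finset Site} (η : Config Λ) : Prop :=
  ∃ x : Site, η.val x ≠ 0 ∧
    ∀ y : Site, η.val y ≠ 0 → Relation.ReflTransGen (bondRel η) x y

/-- Dual coordinates, renormalized to land in ℤ² (within a fixed parity class this maps
dual neighbours to adjacent cells). -/
def cellOf (x : Site) : Cell := ((x.1 - x.2).fdiv 2, (x.1 + x.2).fdiv 2)

/-- The sites of Λ occupied by particles of type 2. -/
def type2Sites {Λ : Finset Site} (η : Config Λ) : Finset Site :=
  Λ.filter (fun x => η.val x = 2)

/-- Tile support of a configuration: the polyomino in dual coordinates given by the unit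
squares centered at the particles of type 2. -/
def tileSupport {Λ : Finset Site} (η : Config Λ) : Finset Cell :=
  (type2Sites η).image cellOf

/- ----------  Polyominoes ---------- -/

/-- Perimeter of a polyomino (number of boundary edges, inner boundaries included). -/
def perim (A : Finset Cell) : ℕ :=
  A.sum (fun c => ((nbrs c).filter (fun d => d ∉ A)).card)

def adjIn (A : Finset Cell) (x y : Cell) : Prop := x ∈ A ∧ y ∈ A ∧ adjacent x y

/-- Connectedness of a polyomino. -/
def PolyConnected (A : Finset Cell) : Prop :=
  A.Nonempty ∧ ∀ x ∈ A, ∀ y ∈ A, Relation.ReflTransGen (adjIn A) x y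

/-- Number of holes: bounded (= finite) connected components of the complement. -/
noncomputable def numHoles (A : Finset Cell) : ℕ :=
  Set.ncard {C : Set Cell | ∃ d : Cell, d ∉ A ∧
    C = {e : Cell | Relation.ReflTransGen (fun u v => adjacent u v ∧ u ∉ A ∧ v ∉ A) d e} ∧
    C.Finite}

/-- The four cells having lattice point v as a corner. -/
def cellsAt (v : Cell) : Finset Cell :=
  {(v.1 - 1, v.2 - 1), (v.1 - 1, v.2), (v.1, v.2 - 1), v}

/-- The lattice points that are corners of cells of A. -/
def vertexSet (A : Finset Cell) : Finset Cell :=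
  A.biUnion (fun c => {c, (c.1 + 1, c.2), (c.1, c.2 + 1), (c.1 + 1, c.2 + 1)})

def occAt (A : Finset Cell) (v : Cell) : ℕ := ((cellsAt v).filter (fun c => c ∈ A)).card

/-- Number of convex corners ψ(A): vertices with exactly one incident occupied cell. -/
def convexCorners (A : Finset Cell) : ℕ :=
  (vertexSet A).sum (fun v => if occAt A v = 1 then 1 else 0)

/-- Number of concave corners φ(A): a vertex with three incident occupied cells counts
once, a vertex with two diagonally opposite occupied cells counts twice. -/
def concaveCorners (A : Finset Cell) : ℕ :=
  (vertexSet A).sum (fun v =>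
    if occAt A v = 3 then 1
    else if occAt A v = 2 ∧ (((v.1 - 1, v.2 - 1) ∈ A ∧ v ∈ A) ∨
          ((v.1 - 1, v.2) ∈ A ∧ (v.1, v.2 - 1) ∈ A)) then 2
    else 0)

/-- T(A) = 2P(A) + ψ(A) − φ(A). -/
def Tpoly (A : Finset Cell) : ℤ :=
  2 * (perim A : ℤ) + (convexCorners A : ℤ) - (concaveCorners A : ℤ)

/-- For connected polyominoes, T(A) = 2P(A) + 4 − 4Q(A). -/
noncomputable def Tconn (A : Finset Cell) : ℤ :=
  2 * (perim A : ℤ) + 4 - 4 * (numHoles A : ℤ)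

/-- Width (number of columns) of the circumscribing rectangle. -/
def polyWidth (A : Finset Cell) : ℤ :=
  (WithBot.unbotD 0 (A.image Prod.fst).max) - (WithTop.untopD 0 (A.image Prod.fst).min) + 1

/-- Height (number of rows) of the circumscribing rectangle. -/
def polyHeight (A : Finset Cell) : ℤ :=
  (WithBot.unbotD 0 (A.image Prod.snd).max) - (WithTop.untopD 0 (A.image Prod.snd).min) + 1

/-- A polyomino is monotone if its perimeter equals the perimeter of its circumscribing
rectangle. -/
def MonotonePoly (A : Finset Cell) : Prop :=
  (perim A : ℤ) = 2 * (polyWidth A + polyHeight A)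

/-- The reference standard polyomino: an (l+ζ)×l rectangle (quasi-square, ζ ∈ {0,1})
with a bar of length k attached to a longest side, starting at offset a. -/
def baseStd (l ζ a k : ℕ) : Finset Cell :=
  ((Finset.range (l + ζ)) ×ˢ (Finset.range l)).image
      (fun q => (((q.1 : ℤ), (q.2 : ℤ)) : Cell))
    ∪ (Finset.range k).image (fun i => ((((a + i : ℕ) : ℤ), (l : ℤ)) : Cell))

/-- The eight symmetries of the square lattice. -/
def dihedralMaps : List (Cell → Cell) :=
  [fun c => (c.1, c.2), fun c => (-c.1, c.2), fun c => (c.1, -c.2), fun c => (-c.1, -c.2),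
   fun c => (c.2, c.1), fun c => (-c.2, c.1), fun c => (c.2, -c.1), fun c => (-c.2, -c.1)]

/-- A standard polyomino: a quasi-square with possibly a bar attached to one of its
longest sides (up to lattice symmetries and translations). -/
def IsStandardPoly (A : Finset Cell) : Prop :=
  ∃ l ζ a k : ℕ, 1 ≤ l ∧ ζ ≤ 1 ∧ a + k ≤ l + ζ ∧
    ∃ f ∈ dihedralMaps, ∃ t : Cell,
      A = (baseStd l ζ a k).image (fun c => (((f c).1 + t.1, (f c).2 + t.2) : Cell))

/- ----------  tb-tiled configurations ---------- -/

/-- V_{*,k}: configurations with exactly k particles of type 2, all lying in Λ⁻⁻. -/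
def VStar (Λ : Finset Site) (k : ℕ) : Set (Config Λ) :=
  {η | numType2 η = k ∧ ∀ x, η.val x = 2 → x ∈ inner2 Λ}

/-- V_{*,k}^{4k}: configurations of V_{*,k} with exactly 4k active bonds and no isolated
particle of type 1 (the tb-tiled configurations with k particles of type 2). -/
def VTiled (Λ : Finset Site) (k : ℕ) : Set (Config Λ) :=
  {η | η ∈ VStar Λ k ∧ numBonds η = 4 * k ∧
    ∀ x, η.val x = 1 → ∃ y ∈ nbrs x, η.val y = 2}

/-- All particles of type 2 have the same (site) parity. -/
def SameParity2 {Λ : Finset Site} (η : Config Λ) : Prop :=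
  ∀ x y : Site, η.val x = 2 → η.val y = 2 → (x.1 + x.2) % 2 = (y.1 + y.2) % 2

/-- A standard configuration: tile support a standard polyomino (all type-2 particles of
one parity). -/
def IsStandardConfig {Λ : Finset Site} (η : Config Λ) : Prop :=
  SameParity2 η ∧ IsStandardPoly (tileSupport η)

/-- A tb-tiled configuration: at least one particle of type 2, every particle of type 2
saturated, no isolated particle of type 1. -/
def IsTbTiled {Λ : Finset Site} (η : Config Λ) : Prop :=
  (∃ x, η.val x = 2) ∧
  (∀ x, η.val x = 2 → ∀ y ∈ nbrs x, η.val y = 1) ∧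
  (∀ x, η.val x = 1 → ∃ y ∈ nbrs x, η.val y = 2)

/-- η is the tb-tiled droplet with type-2 sites S: type-2 exactly on S, type-1 exactly
on the border of S, empty elsewhere. -/
def IsTbDroplet {Λ : Finset Site} (η : Config Λ) (S : Finset Site) : Prop :=
  (∀ x, η.val x = 2 ↔ x ∈ S) ∧ (∀ x, η.val x = 1 ↔ x ∈ siteBorder S)

/- ----------  cluster-wise quantities ---------- -/

def numType1In {Λ : Finset Site} (η : Config Λ) (C : Finset Site) : ℕ :=
  (C.filter (fun x => η.val x = 1)).card

def numType2In {Λ : Finset Site} (η : Config Λ) (C : Finset Site) : ℕ :=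
  (C.filter (fun x => η.val x = 2)).card

def numBondsIn {Λ : Finset Site} (η : Config Λ) (C : Finset Site) : ℕ :=
  ((C ×ˢ C).filter (fun q => q.1 ∈ inner1 Λ ∧ q.2 ∈ inner1 Λ ∧ adjacent q.1 q.2 ∧
    η.val q.1 = 1 ∧ η.val q.2 = 2)).card

def tileSupportIn {Λ : Finset Site} (η : Config Λ) (C : Finset Site) : Finset Cell :=
  (C.filter (fun x => η.val x = 2)).image cellOf

/-- Number of active bonds incident to the site x. -/
def bondDeg {Λ : Finset Site} (η : Config Λ) (x : Site) : ℕ :=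
  ((nbrs x).filter (fun y => x ∈ inner1 Λ ∧ y ∈ inner1 Λ ∧
    ((η.val x = 1 ∧ η.val y = 2) ∨ (η.val x = 2 ∧ η.val y = 1)))).card

/-- Number of missing bonds of the type-1 particles of C. -/
def missingBonds {Λ : Finset Site} (η : Config Λ) (C : Finset Site) : ℤ :=
  ∑ x ∈ C.filter (fun x => η.val x = 1), (4 - (bondDeg η x : ℤ))

/- ----------  geometry for the energy-reduction mechanisms ---------- -/

/-- A site is lattice-connecting: there is a n.n. path of empty sites from it to ∂⁻Λ. -/
def LatticeConnecting {Λ : Finset Site} (η : Config Λ) (x : Site) : Prop :=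
  ∃ l : List Site, List.Chain adjacent x l ∧
    (x :: l).getLast (List.cons_ne_nil x l) ∈ intBdry Λ ∧
    ∀ y ∈ l, y ∈ Λ ∧ η.val y = 0

/-- A pending dimer (x,y): a lattice-connecting type-1 particle x whose unique active
bond is with the adjacent type-2 particle y, which has at most three active bonds. -/
def PendingDimer {Λ : Finset Site} (η : Config Λ) (x y : Site) : Prop :=
  bondRel η x y ∧ η.val x = 1 ∧ η.val y = 2 ∧ LatticeConnecting η x ∧
  bondDeg η x = 1 ∧ bondDeg η y ≤ 3

/-- The sites of a horizontal (in dual coordinates) beam of length l: l+1 particles of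
type 1 at mutual dual distance 1, with left-most site p. -/
def beamSites (p : Site) (l : ℕ) : Finset Site :=
  (Finset.range (l + 1)).image (fun i : ℕ => ((p.1 + (i : ℤ), p.2 - (i : ℤ)) : Site))

/-- The center row of the (south) support of the beam. -/
def centerSites (p : Site) (l : ℕ) : Finset Site :=
  (Finset.range l).image (fun i : ℕ => ((p.1 + (i : ℤ), p.2 - 1 - (i : ℤ)) : Site))

/-- The basement row of the (south) support of the beam. -/
def basementSites (p : Site) (l : ℕ) : Finset Site :=
  (Finset.range (l + 1)).image (fun i : ℕ => ((p.1 - 1 + (i : ℤ), p.2 - 1 - (i : ℤ)) : Site))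

/-- The (south) support of a beam/bridge. -/
def bridgeSupport (p : Site) (l : ℕ) : Finset Site :=
  beamSites p l ∪ centerSites p l ∪ basementSites p l

/-- The 12 sites of a slot: a 4×4 block minus its four corner sites; p is the lower-left
corner of the block. -/
def slotSites (p : Site) : Finset Site :=
  ((Finset.range 4 ×ˢ Finset.range 4).image
      (fun ij => ((p.1 + (ij.1 : ℤ), p.2 + (ij.2 : ℤ)) : Site))) \
    {(p.1, p.2), (p.1 + 3, p.2), (p.1, p.2 + 3), (p.1 + 3, p.2 + 3)}

/-- The slot-conjugate (diagonally opposite) ordered pairs of central sites of a slot. -/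
def slotDiagPairs (p : Site) : List (Site × Site) :=
  [((p.1 + 1, p.2 + 1), (p.1 + 2, p.2 + 2)), ((p.1 + 2, p.2 + 2), (p.1 + 1, p.2 + 1)),
   ((p.1 + 1, p.2 + 2), (p.1 + 2, p.2 + 1)), ((p.1 + 2, p.2 + 1), (p.1 + 1, p.2 + 2))]

/-- The type-2 sites of the bar added on side d (0 = north, 1 = south, 2 = east,
3 = west, in dual coordinates) of the m×n dual rectangle with corner p. -/
def sideBar (p : Site) (m n : ℕ) (d : Fin 4) : Finset Site :=
  if d = 0 then dualRect (p.1 + (n : ℤ), p.2 + (n : ℤ)) m 1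
  else if d = 1 then dualRect (p.1 - 1, p.2 - 1) m 1
  else if d = 2 then dualRect (p.1 + (m : ℤ), p.2 - (m : ℤ)) 1 n
  else dualRect (p.1 - 1, p.2 + 1) 1 n

/-- The length of side d of an m×n dual rectangle. -/
def sideLen (m n : ℕ) (d : Fin 4) : ℕ := if (d : ℕ) ≤ 1 then m else n

/-- The type-2 sites left after removing the outermost bar on side d of the m×n dual
rectangle with corner p. -/
def shrunkRect (p : Site) (m n : ℕ) (d : Fin 4) : Finset Site :=
  if d = 0 then dualRect p m (n - 1)
  else if d = 1 then dualRect (p.1 + 1, p.2 + 1) m (n - 1)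
  else if d = 2 then dualRect p (m - 1) n
  else dualRect (p.1 + 1, p.2 - 1) (m - 1) n


/-!
Changing a configuration at a single site `x` changes `H` by exactly the change of the local
energy `-U · (bonds at x) + Δ(value at x)`. If all four junctions carry a 1, only the centre
changes, and a type-2 centre with four bonds is never worse than what was there. Otherwise
exactly one junction `j` is not of type 1. Make the centre a 2 (it bonds with the three type-1
junctions), then make `j` a 1 (it gains at least the bond with the centre, and a former 2 at `j`
loses at most three bonds). By `Δ1 < U`, `2U + Δ1 < Δ2` and `Δ1 + Δ2 < 4U` the sum of the two
changes is non-positive for each of the six possible old values at `i` and `j`; it vanishes when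
a 1 at the centre and a 2 at `j` are swapped.
-/

lemma mem_nbrs_iff_adjacent {x y : Site} : y ∈ nbrs x ↔ adjacent x y := by
  obtain ⟨a, b⟩ := x; obtain ⟨c, d⟩ := y
  simp only [adjacent, nbrs, Finset.mem_insert, Finset.mem_singleton, Prod.mk.injEq]
  rcases abs_cases (a - c) with ⟨h1, h2⟩ | ⟨h1, h2⟩ <;>
    rcases abs_cases (b - d) with ⟨h3, h4⟩ | ⟨h3, h4⟩ <;> omega

lemma adjacent_comm {x y : Site} : adjacent x y ↔ adjacent y x := by
  rw [adjacent, adjacent, abs_sub_comm, abs_sub_comm x.2]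

lemma mem_nbrs_comm {x y : Site} : y ∈ nbrs x ↔ x ∈ nbrs y := by
  rw [mem_nbrs_iff_adjacent, mem_nbrs_iff_adjacent, adjacent_comm]

lemma not_adjacent_self (x : Site) : ¬ adjacent x x := by
  simp [adjacent]

lemma ne_of_mem_nbrs {x y : Site} (hy : y ∈ nbrs x) : y ≠ x := by
  rintro rfl
  exact not_adjacent_self y (mem_nbrs_iff_adjacent.mp hy)

lemma card_nbrs (x : Site) : (nbrs x).card = 4 := by
  obtain ⟨a, b⟩ := x
  simp only [nbrs]
  rw [Finset.card_insert_of_notMem, Finset.card_insert_of_notMem,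
    Finset.card_insert_of_notMem, Finset.card_singleton] <;>
  · simp only [Finset.mem_insert, Finset.mem_singleton, Prod.mk.injEq, not_or]
    omega

lemma inner1_subset (Λ : Finset Site) : inner1 Λ ⊆ Λ := Finset.sdiff_subset

lemma inner2_subset_inner1 (Λ : Finset Site) : inner2 Λ ⊆ inner1 Λ := Finset.sdiff_subset

lemma nbrs_subset_inner1_of_mem_inner2 {Λ : Finset Site} {x : Site} (hx : x ∈ inner2 Λ) :
    nbrs x ⊆ inner1 Λ := by
  simp only [inner2, intBdry, Finset.mem_sdiff, Finset.mem_filter, not_and, not_not] at hx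
  exact hx.2 hx.1

section Configurations

variable {Λ : Finset Site}

def Config.update (η : Config Λ) {x : Site} (hx : x ∈ Λ) (v : Fin 3) : Config Λ where
  val := Function.update η.val x v
  zero_outside y hy := by
    rw [Function.update_of_ne (ne_of_mem_of_not_mem hx hy).symm, η.zero_outside y hy]

lemma Config.update_val_self (η : Config Λ) {x : Site} (hx : x ∈ Λ) (v : Fin 3) :
    (η.update hx v).val x = v :=
  Function.update_self ..

lemma Config.update_val_of_ne (η : Config Λ) {x y : Site} (hx : x ∈ Λ) (v : Fin 3)
    (hy : y ≠ x) : (η.update hx v).val y = η.val y :=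
  Function.update_of_ne hy ..

def nbrCount (η : Config Λ) (x : Site) (v : Fin 3) : ℕ :=
  ((nbrs x).filter (fun y => η.val y = v)).card

lemma nbrCount_zero_add_one_add_two (η : Config Λ) (x : Site) :
    nbrCount η x 0 + nbrCount η x 1 + nbrCount η x 2 = 4 := by
  rw [← card_nbrs x, Finset.card_eq_sum_card_fiberwise (f := η.val) (t := Finset.univ)
    fun _ _ => Finset.mem_univ _, Fin.sum_univ_three]
  rfl

lemma one_le_nbrCount (η : Config Λ) {x y : Site} (hy : y ∈ nbrs x) :
    1 ≤ nbrCount η x (η.val y) :=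
  Finset.card_pos.mpr ⟨y, Finset.mem_filter.mpr ⟨hy, rfl⟩⟩

lemma nbrCount_eq_of_eq_off {η η' : Config Λ} {x : Site} (h : ∀ y ≠ x, η'.val y = η.val y)
    (v : Fin 3) : nbrCount η' x v = nbrCount η x v := by
  refine congrArg Finset.card (Finset.filter_congr fun y hy => ?_)
  rw [h y (ne_of_mem_nbrs hy)]

lemma nbrCount_le_three {η : Config Λ} {x y : Site} {v : Fin 3} (hy : y ∈ nbrs x)
    (hv : η.val y ≠ v) : nbrCount η x v ≤ 3 := by
  have hsub : (nbrs x).filter (fun z => η.val z = v) ⊆ (nbrs x).erase y := fun z hz => by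
    obtain ⟨hz, hzv⟩ := Finset.mem_filter.mp hz
    exact Finset.mem_erase.mpr ⟨fun h => hv (h ▸ hzv), hz⟩
  simpa [nbrCount, Finset.card_erase_of_mem hy, card_nbrs] using Finset.card_le_card hsub

lemma val_eq_of_three_le_nbrCount {η : Config Λ} {x j y : Site} {v : Fin 3}
    (h3 : 3 ≤ nbrCount η x v) (hj : j ∈ nbrs x) (hjv : η.val j ≠ v) (hy : y ∈ nbrs x)
    (hyj : y ≠ j) : η.val y = v := by
  by_contra hyv
  have hsub : (nbrs x).filter (fun z => η.val z = v) ⊆ ((nbrs x).erase j).erase y := by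
    intro z hz
    obtain ⟨hz, hzv⟩ := Finset.mem_filter.mp hz
    exact Finset.mem_erase.mpr ⟨fun h => hyv (h ▸ hzv),
      Finset.mem_erase.mpr ⟨fun h => hjv (h ▸ hzv), hz⟩⟩
  have := Finset.card_le_card hsub
  rw [Finset.card_erase_of_mem (Finset.mem_erase.mpr ⟨hyj, hy⟩), Finset.card_erase_of_mem hj,
    card_nbrs] at this
  exact absurd (h3.trans this) (by norm_num)

lemma bondDeg_eq_zero {η : Config Λ} {x : Site} (h : η.val x = 0) : bondDeg η x = 0 := by
  simp [bondDeg, h]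

lemma bondDeg_le_of_eq_one {η : Config Λ} {x : Site} (h : η.val x = 1) :
    bondDeg η x ≤ nbrCount η x 2 :=
  Finset.card_le_card <| Finset.monotone_filter_right _ fun y _ hy => by simp_all

lemma bondDeg_le_of_eq_two {η : Config Λ} {x : Site} (h : η.val x = 2) :
    bondDeg η x ≤ nbrCount η x 1 :=
  Finset.card_le_card <| Finset.monotone_filter_right _ fun y _ hy => by simp_all

lemma bondDeg_eq_of_eq_two {η : Config Λ} {x : Site} (hx : x ∈ inner2 Λ) (h : η.val x = 2) :
    bondDeg η x = nbrCount η x 1 := by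
  refine congrArg Finset.card (Finset.filter_congr fun y hy => ?_)
  simp [h, inner2_subset_inner1 Λ hx, nbrs_subset_inner1_of_mem_inner2 hx hy]

lemma one_le_bondDeg {η : Config Λ} {x y : Site} (h : bondRel η x y) : 1 ≤ bondDeg η x :=
  Finset.card_pos.mpr ⟨y, Finset.mem_filter.mpr
    ⟨mem_nbrs_iff_adjacent.mpr h.2.2.1, h.1, h.2.1, h.2.2.2⟩⟩

end Configurations

section Bonds

variable {Λ : Finset Site}

def activeBonds (η : Config Λ) : Finset (Site × Site) :=
  (inner1 Λ ×ˢ inner1 Λ).filter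
    (fun p => adjacent p.1 p.2 ∧ η.val p.1 = 1 ∧ η.val p.2 = 2)

def bondsAt (η : Config Λ) (x : Site) : Finset (Site × Site) :=
  (activeBonds η).filter (fun p => p.1 = x ∨ p.2 = x)

lemma card_bondsAt (η : Config Λ) (x : Site) : (bondsAt η x).card = bondDeg η x := by
  refine Finset.card_nbij' (fun p => if p.1 = x then p.2 else p.1)
    (fun y => if η.val x = 1 then (x, y) else (y, x)) ?_ ?_ ?_ ?_
  · rintro ⟨a, b⟩ hp
    simp only [bondsAt, activeBonds, Finset.coe_filter, Finset.mem_filter, Finset.mem_product,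
      Set.mem_ofPred_eq] at hp
    obtain ⟨⟨⟨ha, hb⟩, hab, h1, h2⟩, rfl | rfl⟩ := hp
    · simp [mem_nbrs_iff_adjacent, *]
    · have : a ≠ b := by rintro rfl; exact not_adjacent_self _ hab
      simp [mem_nbrs_iff_adjacent, adjacent_comm.mp hab, *]
  · intro y hy
    simp only [Finset.coe_filter, Set.mem_ofPred_eq] at hy
    obtain ⟨hy, hx, hyI, h | h⟩ := hy
    · simp [bondsAt, activeBonds, h, hx, hyI, ← mem_nbrs_iff_adjacent, hy]
    · simp [bondsAt, activeBonds, h, hx, hyI, ← mem_nbrs_iff_adjacent, mem_nbrs_comm.mp hy]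
  · rintro ⟨a, b⟩ hp
    simp only [bondsAt, activeBonds, Finset.coe_filter, Finset.mem_filter, Finset.mem_product,
      Set.mem_ofPred_eq] at hp
    obtain ⟨⟨⟨ha, hb⟩, hab, h1, h2⟩, rfl | rfl⟩ := hp
    · simp [h1]
    · have : a ≠ b := by rintro rfl; exact not_adjacent_self _ hab
      simp [h2, this]
  · intro y hy
    simp only [Finset.coe_filter, Set.mem_ofPred_eq] at hy
    split_ifs <;> simp [ne_of_mem_nbrs hy.1]

lemma numBonds_add_bondDeg_of_eq_off {η η' : Config Λ} {x : Site}
    (h : ∀ y ≠ x, η'.val y = η.val y) :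
    numBonds η' + bondDeg η x = numBonds η + bondDeg η' x := by
  have away : (activeBonds η').filter (fun p => ¬ (p.1 = x ∨ p.2 = x)) =
      (activeBonds η).filter (fun p => ¬ (p.1 = x ∨ p.2 = x)) := by
    ext p
    simp only [activeBonds, Finset.mem_filter, not_or]
    constructor <;> rintro ⟨⟨hp, hadj, h1, h2⟩, h1x, h2x⟩ <;> simp_all
  have split (ξ : Config Λ) := Finset.card_filter_add_card_filter_not
    (s := activeBonds ξ) (fun p => p.1 = x ∨ p.2 = x)
  rw [numBonds, numBonds, ← activeBonds, ← activeBonds, ← split η, ← split η', away,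
    ← bondsAt, ← bondsAt, card_bondsAt, card_bondsAt]
  ring

end Bonds

section LocalEnergy

variable {Λ : Finset Site}

lemma card_filter_add_ite_of_eq_off {η η' : Config Λ} {x : Site}
    (h : ∀ y ≠ x, η'.val y = η.val y) (v : Fin 3) :
    (Λ.filter (fun y => η'.val y = v)).card + (if η.val x = v then 1 else 0) =
      (Λ.filter (fun y => η.val y = v)).card + (if η'.val x = v then 1 else 0) := by
  by_cases hx : x ∈ Λ
  · simp only [Finset.card_filter, ← Finset.add_sum_erase Λ _ hx]
    rw [Finset.sum_congr rfl fun y hy => by rw [h y (Finset.ne_of_mem_erase hy)]]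
    ring
  · have hfilter : Λ.filter (fun y => η'.val y = v) = Λ.filter (fun y => η.val y = v) :=
      Finset.filter_congr fun y hy => by rw [h y (ne_of_mem_of_not_mem hy hx)]
    rw [hfilter, η.zero_outside x hx, η'.zero_outside x hx]

noncomputable def localEnergy (U Δ1 Δ2 : ℝ) (η : Config Λ) (x : Site) : ℝ :=
  -U * bondDeg η x + Δ1 * (if η.val x = 1 then 1 else 0) +
    Δ2 * (if η.val x = 2 then 1 else 0)

lemma energy_sub_eq_localEnergy_sub {η η' : Config Λ} {x : Site}
    (h : ∀ y ≠ x, η'.val y = η.val y) (U Δ1 Δ2 : ℝ) :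
    energy U Δ1 Δ2 η' - energy U Δ1 Δ2 η =
      localEnergy U Δ1 Δ2 η' x - localEnergy U Δ1 Δ2 η x := by
  have hB : (numBonds η' + bondDeg η x : ℝ) = numBonds η + bondDeg η' x := by
    exact_mod_cast numBonds_add_bondDeg_of_eq_off h
  have h1 : ((Λ.filter (fun y => η'.val y = 1)).card + (if η.val x = 1 then 1 else 0) : ℝ) =
      (Λ.filter (fun y => η.val y = 1)).card + (if η'.val x = 1 then 1 else 0) := by
    exact_mod_cast card_filter_add_ite_of_eq_off h 1
  have h2 : ((Λ.filter (fun y => η'.val y = 2)).card + (if η.val x = 2 then 1 else 0) : ℝ) =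
      (Λ.filter (fun y => η.val y = 2)).card + (if η'.val x = 2 then 1 else 0) := by
    exact_mod_cast card_filter_add_ite_of_eq_off h 2
  simp only [energy, localEnergy, numType1, numType2]
  linear_combination (-U) * hB + Δ1 * h1 + Δ2 * h2

variable (U Δ1 Δ2 : ℝ) {η : Config Λ} {x : Site}

lemma localEnergy_of_eq_zero (h : η.val x = 0) : localEnergy U Δ1 Δ2 η x = 0 := by
  simp [localEnergy, h, bondDeg_eq_zero h]

lemma le_localEnergy_of_eq_one {n : ℝ} (hU : 0 ≤ U) (h : η.val x = 1)
    (hn : (nbrCount η x 2 : ℝ) ≤ n) : -U * n + Δ1 ≤ localEnergy U Δ1 Δ2 η x := by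
  have : (bondDeg η x : ℝ) ≤ n := (Nat.cast_le.mpr (bondDeg_le_of_eq_one h)).trans hn
  simp +decide only [localEnergy, h, ↓reduceIte]
  linarith [mul_le_mul_of_nonneg_left this hU]

lemma le_localEnergy_of_eq_two {n : ℝ} (hU : 0 ≤ U) (h : η.val x = 2)
    (hn : (nbrCount η x 1 : ℝ) ≤ n) : -U * n + Δ2 ≤ localEnergy U Δ1 Δ2 η x := by
  have : (bondDeg η x : ℝ) ≤ n := (Nat.cast_le.mpr (bondDeg_le_of_eq_two h)).trans hn
  simp +decide only [localEnergy, h, ↓reduceIte]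
  linarith [mul_le_mul_of_nonneg_left this hU]

lemma localEnergy_of_eq_two_of_mem_inner2 (hx : x ∈ inner2 Λ) (h : η.val x = 2) :
    localEnergy U Δ1 Δ2 η x = -U * nbrCount η x 1 + Δ2 := by
  simp +decide [localEnergy, h, bondDeg_eq_of_eq_two hx h]

lemma localEnergy_le_of_bondRel {y : Site} (hU : 0 ≤ U) (hxy : bondRel η x y)
    (h : η.val x = 1) : localEnergy U Δ1 Δ2 η x ≤ -U + Δ1 := by
  have : (1 : ℝ) ≤ bondDeg η x := by exact_mod_cast one_le_bondDeg hxy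
  simp +decide only [localEnergy, h, ↓reduceIte]
  linarith [mul_le_mul_of_nonneg_left this hU]

end LocalEnergy

section TileCompletion

variable {Λ : Finset Site} {U Δ1 Δ2 : ℝ} {η η' : Config Λ} {i : Site}

lemma energy_le_of_fill_center (hU : 0 ≤ U) (hΔ1 : 0 ≤ Δ1) (hΔ2 : Δ2 ≤ 4 * U)
    (hi : i ∈ inner2 Λ) (hjunc : ∀ y ∈ nbrs i, η.val y = 1) (hη'i : η'.val i = 2)
    (hη' : ∀ y ≠ i, η'.val y = η.val y) :
    energy U Δ1 Δ2 η' ≤ energy U Δ1 Δ2 η := by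
  have e := energy_sub_eq_localEnergy_sub hη' U Δ1 Δ2
  have h4 : nbrCount η i 1 = 4 := by
    rw [nbrCount, Finset.filter_true_of_mem hjunc, card_nbrs]
  have hL' : localEnergy U Δ1 Δ2 η' i = -U * 4 + Δ2 := by
    rw [localEnergy_of_eq_two_of_mem_inner2 U Δ1 Δ2 hi hη'i, nbrCount_eq_of_eq_off hη', h4]
    norm_num
  have hcount := nbrCount_zero_add_one_add_two η i
  obtain h | h | h : η.val i = 0 ∨ η.val i = 1 ∨ η.val i = 2 := by omega
  · linarith [localEnergy_of_eq_zero U Δ1 Δ2 h]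
  · linarith [le_localEnergy_of_eq_one (n := 0) U Δ1 Δ2 hU h (by norm_cast; omega)]
  · linarith [le_localEnergy_of_eq_two (n := 4) U Δ1 Δ2 hU h (by norm_cast; omega)]

lemma energy_sub_le_of_fill_center_and_junction (hU : 0 ≤ U) {ξ : Config Λ} {j : Site}
    (hi : i ∈ inner2 Λ) (hj : j ∈ nbrs i) (hη3 : nbrCount η i 1 = 3)
    (hξ : ∀ y ≠ i, ξ.val y = η.val y) (hξi : ξ.val i = 2)
    (hη' : ∀ y ≠ j, η'.val y = ξ.val y) (hη'j : η'.val j = 1) :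
    energy U Δ1 Δ2 η' - energy U Δ1 Δ2 η ≤
      -4 * U + Δ1 + Δ2 - localEnergy U Δ1 Δ2 ξ j - localEnergy U Δ1 Δ2 η i := by
  have hbond : bondRel η' j i := ⟨nbrs_subset_inner1_of_mem_inner2 hi hj,
    inner2_subset_inner1 Λ hi, mem_nbrs_iff_adjacent.mp (mem_nbrs_comm.mp hj),
    Or.inl ⟨hη'j, (hη' i (ne_of_mem_nbrs hj).symm).trans hξi⟩⟩
  have hLη'j := localEnergy_le_of_bondRel U Δ1 Δ2 hU hbond hη'j
  have hLξi : localEnergy U Δ1 Δ2 ξ i = -U * 3 + Δ2 := by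
    rw [localEnergy_of_eq_two_of_mem_inner2 U Δ1 Δ2 hi hξi, nbrCount_eq_of_eq_off hξ, hη3]
    norm_num
  linarith [energy_sub_eq_localEnergy_sub hξ U Δ1 Δ2,
    energy_sub_eq_localEnergy_sub hη' U Δ1 Δ2]

lemma energy_le_of_fill_center_and_junction (hU : 0 ≤ U) (hΔ1 : 0 ≤ Δ1) (hΔ1U : Δ1 ≤ U)
    (hgap : 2 * U + Δ1 ≤ Δ2) (hsum : Δ1 + Δ2 ≤ 4 * U) {ξ : Config Λ} {j : Site}
    (hi : i ∈ inner2 Λ) (hj : j ∈ nbrs i) (hηj : η.val j ≠ 1) (h3 : 3 ≤ nbrCount η i 1)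
    (hξ : ∀ y ≠ i, ξ.val y = η.val y) (hξi : ξ.val i = 2)
    (hη' : ∀ y ≠ j, η'.val y = ξ.val y) (hη'j : η'.val j = 1) :
    energy U Δ1 Δ2 η' ≤ energy U Δ1 Δ2 η := by
  have hη3 : nbrCount η i 1 = 3 := le_antisymm (nbrCount_le_three hj hηj) h3
  have e := energy_sub_le_of_fill_center_and_junction (Δ1 := Δ1) (Δ2 := Δ2) hU hi hj hη3
    hξ hξi hη' hη'j
  have hcount := nbrCount_zero_add_one_add_two η i
  have hjcount := one_le_nbrCount η hj
  have hξcount := nbrCount_zero_add_one_add_two ξ j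
  have hicount := one_le_nbrCount ξ (mem_nbrs_comm.mp hj)
  rw [hξi] at hicount
  have hξj := hξ j (ne_of_mem_nbrs hj)
  obtain hj0 | hj2 : η.val j = 0 ∨ η.val j = 2 := by omega
  · rw [hj0] at hjcount
    have hLξj := localEnergy_of_eq_zero U Δ1 Δ2 (hξj.trans hj0)
    obtain h | h | h : η.val i = 0 ∨ η.val i = 1 ∨ η.val i = 2 := by omega
    · linarith [localEnergy_of_eq_zero U Δ1 Δ2 h]
    · linarith [le_localEnergy_of_eq_one (n := 0) U Δ1 Δ2 hU h (by norm_cast; omega)]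
    · linarith [le_localEnergy_of_eq_two (n := 3) U Δ1 Δ2 hU h (by norm_cast; omega)]
  · rw [hj2] at hjcount
    have hLξj := le_localEnergy_of_eq_two (n := 3) U Δ1 Δ2 hU (hξj.trans hj2)
      (by norm_cast; omega)
    obtain h | h | h : η.val i = 0 ∨ η.val i = 1 ∨ η.val i = 2 := by omega
    · linarith [localEnergy_of_eq_zero U Δ1 Δ2 h]
    · linarith [le_localEnergy_of_eq_one (n := 1) U Δ1 Δ2 hU h (by norm_cast; omega)]
    · linarith [le_localEnergy_of_eq_two (n := 3) U Δ1 Δ2 hU h (by norm_cast; omega)]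

end TileCompletion

/-- completing a tile with at least three junction sites occupied by
particles of type 1 into a tb-tile does not raise the energy. -/
theorem completing_tile_lowers_energy
    (U Δ1 Δ2 : ℝ) (hU : 0 < U) (hΔ1 : 0 < Δ1) (hΔ1U : Δ1 < U)
    (hgap : 2 * U < Δ2 - Δ1) (hsum : Δ1 + Δ2 < 4 * U)
    (Λ : Finset Site) (η η' : Config Λ) (i : Site) (hi : i ∈ inner2 Λ)
    (h3 : 3 ≤ ((nbrs i).filter (fun y => η.val y = 1)).card)
    (hη' : ∀ x, η'.val x = if x = i then 2 else if x ∈ nbrs i then 1 else η.val x) :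
    energy U Δ1 Δ2 η' ≤ energy U Δ1 Δ2 η := by
  by_cases hjunc : ∀ y ∈ nbrs i, η.val y = 1
  · refine energy_le_of_fill_center hU.le hΔ1.le (by linarith) hi hjunc (by simp [hη'])
      fun y hyi => ?_
    rw [hη', if_neg hyi]
    split_ifs with hy
    exacts [(hjunc y hy).symm, rfl]
  push Not at hjunc
  obtain ⟨j, hj, hηj⟩ := hjunc
  have hiΛ : i ∈ Λ := inner1_subset Λ (inner2_subset_inner1 Λ hi)
  refine energy_le_of_fill_center_and_junction hU.le hΔ1.le hΔ1U.le (by linarith) hsum.le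
    hi hj hηj h3 (fun _ => η.update_val_of_ne hiΛ 2) (η.update_val_self hiΛ 2)
    (fun y hyj => ?_) (by simp [hη', hj, ne_of_mem_nbrs hj])
  rw [hη']
  split_ifs with hyi hy
  · rw [hyi, η.update_val_self]
  · rw [η.update_val_of_ne hiΛ 2 hyi, val_eq_of_three_le_nbrCount h3 hj hηj hy hyj]
  · rw [η.update_val_of_ne hiΛ 2 hyi]
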